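/- arXiv:2302.10093 — 2 statements merged into one kernel-verified Lean document; each statement's English description precedes it below -/
import Mathlib

section
/- Let K⁺, K⁻ : Fin N → ℝ be nonnegative weights with ∑ᵢ (K⁺ i + K⁻ i) = 1, and let l : Fin N → ℝ satisfy |l i| ≤ G for all i. Let η > 0 with η ≤ 1/G. Define Z = ∑ᵢ K⁺ i · exp(-η · l i) + K⁻ i · exp(η · l i) and γ = ∑ᵢ K⁺ i · l i - ∑ᵢ K⁻ i · l i. Then log Z ≤ -η·γ + η²·G². -/
open Finset in
private lemma exp_le_one_add_add_sq {x : ℝ} (hx : |x| ≤ 1) :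
    Real.exp x ≤ 1 + x + x ^ 2 := by
  have h := Real.exp_bound hx (n := 2) (by norm_num)
  have hs : ∑ i ∈ Finset.range 2, x ^ i / (Nat.factorial i) = 1 + x := by
    simp [Finset.sum_range_succ, Nat.factorial]
  rw [hs] at h
  have h2 : Real.exp x - (1 + x) ≤ |x| ^ 2 * ((2:ℕ).succ / ((2:ℕ).factorial * 2)) :=
    (abs_le.mp h).2
  have : |x| ^ 2 * ((2:ℕ).succ / ((2:ℕ).factorial * 2)) ≤ x ^ 2 := by
    rw [sq_abs]
    norm_num [Nat.factorial]
    nlinarith [sq_nonneg x]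
  linarith

open Finset in
theorem log_normalizer_bound (N : ℕ) (Kp Kn l : Fin N → ℝ) (G η : ℝ)
    (hKp : ∀ i, 0 ≤ Kp i) (hKn : ∀ i, 0 ≤ Kn i)
    (hsum : ∑ i, (Kp i + Kn i) = 1)
    (hl : ∀ i, |l i| ≤ G)
    (hη : 0 < η) (hηG : η ≤ 1 / G) :
    Real.log (∑ i, (Kp i * Real.exp (-η * l i) + Kn i * Real.exp (η * l i)))
      ≤ -η * (∑ i, Kp i * l i - ∑ i, Kn i * l i) + η ^ 2 * G ^ 2 := by
  have hG : 0 < G := by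
    by_contra h
    push_neg at h
    have : (1 : ℝ) / G ≤ 0 := one_div_nonpos.mpr h
    linarith
  have hηG1 : η * G ≤ 1 := by
    rw [le_div_iff₀ hG] at hηG
    linarith
  have hx : ∀ i, |η * l i| ≤ 1 := by
    intro i
    rw [abs_mul, abs_of_pos hη]
    calc η * |l i| ≤ η * G := by
          exact mul_le_mul_of_nonneg_left (hl i) hη.le
      _ ≤ 1 := hηG1
  set Z := ∑ i, (Kp i * Real.exp (-η * l i) + Kn i * Real.exp (η * l i)) with hZ
  -- positivity of Z
  have hZpos : 0 < Z := by
    have hkey : Real.exp (-(η * G)) ≤ Z := by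
      have heq : Real.exp (-(η * G)) = ∑ i, (Kp i + Kn i) * Real.exp (-(η * G)) := by
        rw [← Finset.sum_mul, hsum, one_mul]
      rw [heq]
      apply Finset.sum_le_sum
      intro i _
      have hli := abs_le.mp (hl i)
      have h1 : Real.exp (-(η * G)) ≤ Real.exp (-η * l i) := by
        apply Real.exp_le_exp.mpr; nlinarith
      have h2 : Real.exp (-(η * G)) ≤ Real.exp (η * l i) := by
        apply Real.exp_le_exp.mpr; nlinarith
      nlinarith [hKp i, hKn i]
    exact lt_of_lt_of_le (Real.exp_pos _) hkey
  -- pointwise exponential bounds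
  have hterm : ∀ i, Kp i * Real.exp (-η * l i) + Kn i * Real.exp (η * l i)
      ≤ Kp i * (1 + (-η * l i) + (η * l i) ^ 2) + Kn i * (1 + η * l i + (η * l i) ^ 2) := by
    intro i
    have hxi := hx i
    have h1 : Real.exp (-η * l i) ≤ 1 + (-η * l i) + (η * l i) ^ 2 := by
      have : |(-η * l i)| ≤ 1 := by rwa [neg_mul, abs_neg]
      have h := exp_le_one_add_add_sq this
      have heq : (-η * l i) ^ 2 = (η * l i) ^ 2 := by ring
      rwa [heq] at h
    have h2 : Real.exp (η * l i) ≤ 1 + η * l i + (η * l i) ^ 2 :=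
      exp_le_one_add_add_sq hxi
    have := hKp i; have := hKn i
    nlinarith
  have hZle : Z ≤ 1 + -η * ((∑ i, Kp i * l i) - ∑ i, Kn i * l i)
      + η ^ 2 * ∑ i, (Kp i + Kn i) * l i ^ 2 := by
    calc Z ≤ ∑ i, (Kp i * (1 + (-η * l i) + (η * l i) ^ 2)
            + Kn i * (1 + η * l i + (η * l i) ^ 2)) :=
          Finset.sum_le_sum fun i _ => hterm i
      _ = (∑ i, (Kp i + Kn i)) + -η * ((∑ i, Kp i * l i) - ∑ i, Kn i * l i)
            + η ^ 2 * ∑ i, (Kp i + Kn i) * l i ^ 2 := by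
          rw [Finset.mul_sum, ← Finset.sum_sub_distrib, Finset.mul_sum,
            ← Finset.sum_add_distrib, ← Finset.sum_add_distrib]
          exact Finset.sum_congr rfl fun i _ => by ring
      _ = 1 + -η * ((∑ i, Kp i * l i) - ∑ i, Kn i * l i)
            + η ^ 2 * ∑ i, (Kp i + Kn i) * l i ^ 2 := by rw [hsum]
  have hsq : ∑ i, (Kp i + Kn i) * l i ^ 2 ≤ G ^ 2 := by
    calc ∑ i, (Kp i + Kn i) * l i ^ 2 ≤ ∑ i, (Kp i + Kn i) * G ^ 2 := by
          apply Finset.sum_le_sum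
          intro i _
          have h1 : l i ^ 2 ≤ G ^ 2 := by
            rw [← sq_abs]
            exact pow_le_pow_left₀ (abs_nonneg _) (hl i) 2
          have := hKp i; have := hKn i
          nlinarith
      _ = G ^ 2 := by rw [← Finset.sum_mul, hsum, one_mul]
  have hlog : Real.log Z ≤ Z - 1 := Real.log_le_sub_one_of_pos hZpos
  have hη2 : (0:ℝ) ≤ η ^ 2 := sq_nonneg η
  nlinarith [mul_le_mul_of_nonneg_left hsq hη2]
end

section
/- Let Z_1, ..., Z_T be the B-DISTIL normalizers with log Z_t ≤ -η·γ_t + η²G² for each t, and suppose the weights satisfy 0 < K_{T+1}⁺ i ≤ 1 with K_1⁺ i = 1/(2N) and K_{T+1}⁺ i = K_1⁺ i · exp(-η·T·(F_T(x_i) - g(x_i)))/∏_t Z_t. Then -η·T·(F_T(x_i) - g(x_i)) ≤ ln(2N) + η²TG² - η·∑_{t=1}^T γ_t. -/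
open Real Finset

lemma le_log_sub_log_of_mul_exp_div_le_one {a c P : ℝ} (hc : 0 < c) (hP : 0 < P)
    (h : c * exp a / P ≤ 1) : a ≤ log P - log c := by
  have hexp : exp a ≤ P / c := by
    rw [div_le_one hP] at h
    rw [le_div_iff₀ hc]
    linarith
  calc a = log (exp a) := (log_exp a).symm
    _ ≤ log (P / c) := log_le_log (exp_pos a) hexp
    _ = log P - log c := log_div hP.ne' hc.ne'

lemma log_prod_le_card_mul_sub_mul_sum {ι : Type*} {s : Finset ι} {Z γ : ι → ℝ} {η δ : ℝ}
    (hZ : ∀ t ∈ s, 0 < Z t) (hlogZ : ∀ t ∈ s, log (Z t) ≤ -η * γ t + δ) :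
    log (∏ t ∈ s, Z t) ≤ #s * δ - η * ∑ t ∈ s, γ t := by
  calc log (∏ t ∈ s, Z t) = ∑ t ∈ s, log (Z t) := log_prod fun t ht => (hZ t ht).ne'
    _ ≤ ∑ t ∈ s, (-η * γ t + δ) := sum_le_sum hlogZ
    _ = #s * δ - η * ∑ t ∈ s, γ t := by
      rw [sum_add_distrib, sum_const, nsmul_eq_mul, ← mul_sum]
      ring

open Finset in
theorem one_sided_residual_bound_general (N T : ℕ) (hN : 1 ≤ N)
    (η G r KT1 : ℝ) (Z γ : ℕ → ℝ)
    (hZpos : ∀ t ∈ Finset.Icc 1 T, 0 < Z t)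
    (hlogZ : ∀ t ∈ Finset.Icc 1 T, Real.log (Z t) ≤ -η * γ t + η ^ 2 * G ^ 2)
    (hKle : KT1 ≤ 1)
    (hK : KT1 = (1 / (2 * N)) * Real.exp (-η * T * r) / ∏ t ∈ Finset.Icc 1 T, Z t) :
    -η * T * r ≤ Real.log (2 * N) + η ^ 2 * T * G ^ 2 -
      η * ∑ t ∈ Finset.Icc 1 T, γ t := by
  have hN' : (0 : ℝ) < 2 * N := by positivity
  have hweight := le_log_sub_log_of_mul_exp_div_le_one (one_div_pos.mpr hN')
    (prod_pos hZpos) (hK ▸ hKle)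
  have hprod := log_prod_le_card_mul_sub_mul_sum hZpos hlogZ
  rw [one_div, log_inv] at hweight
  rw [Nat.card_Icc, Nat.add_sub_cancel] at hprod
  linarith

open Finset in
theorem one_sided_residual_bound (N T : ℕ) (hN : 1 ≤ N) (hT : 1 ≤ T)
    (η G r KT1 : ℝ) (Z γ : ℕ → ℝ)
    (hG : 0 < G) (hη : 0 < η) (hηG : η ≤ 1 / G)
    (hZpos : ∀ t ∈ Finset.Icc 1 T, 0 < Z t)
    (hlogZ : ∀ t ∈ Finset.Icc 1 T, Real.log (Z t) ≤ -η * γ t + η ^ 2 * G ^ 2)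
    (hKpos : 0 < KT1) (hKle : KT1 ≤ 1)
    (hK : KT1 = (1 / (2 * N)) * Real.exp (-η * T * r) / ∏ t ∈ Finset.Icc 1 T, Z t) :
    -η * T * r ≤ Real.log (2 * N) + η ^ 2 * T * G ^ 2 -
      η * ∑ t ∈ Finset.Icc 1 T, γ t :=
  one_sided_residual_bound_general N T hN η G r KT1 Z γ hZpos hlogZ hKle hK
end
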